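/- Under the simple Lehmann model S(t1,t2 | z) = (S⁰(t1,t2))^{c} with c = exp(bᵀz), the double-failure hazard satisfies λ11(t1,t2 | z) = c·λ11⁰(t1,t2) − λ10⁰(t1,t2)·λ01⁰(t1,t2)·(c − c²), where λ11(t1,t2|z) = (∂²S(t1,t2|z)/∂t1∂t2)/S(t1,t2|z). -/

import Mathlib

/-!
By the chain rule `∂₁ (S⁰)^c = c (S⁰)^(c-1) ∂₁S⁰`, and the product rule in `t₂` then gives
`∂₂∂₁ (S⁰)^c = c (S⁰)^(c-1) ∂₂∂₁S⁰ + c (c-1) (S⁰)^(c-2) ∂₁S⁰ ∂₂S⁰`; dividing by `(S⁰)^c` turns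
this into the hazard identity.
-/

open Function

section PartialDerivatives

variable {f : ℝ → ℝ → ℝ} {x y : ℝ}

theorem hasDerivAt_partial_fst (hf : DifferentiableAt ℝ (uncurry f) (x, y)) :
    HasDerivAt (fun u => f u y) (fderiv ℝ (uncurry f) (x, y) (1, 0)) x := by
  simpa [comp_def] using
    hf.hasFDerivAt.comp_hasDerivAt x ((hasDerivAt_id x).prodMk (hasDerivAt_const x y))

theorem differentiableAt_partial_snd (hf : DifferentiableAt ℝ (uncurry f) (x, y)) :
    DifferentiableAt ℝ (f x) y :=
  hf.comp y (differentiableAt_const x |>.prodMk differentiableAt_id)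

theorem differentiableAt_deriv_partial_fst (hf : ContDiff ℝ 2 (uncurry f)) :
    DifferentiableAt ℝ (fun v => deriv (fun u => f u v) x) y := by
  have hf1 : Differentiable ℝ (uncurry f) := hf.differentiable (by norm_num)
  simp_rw [fun v => (hasDerivAt_partial_fst (hf1 (x, v))).deriv]
  have hG : ContDiff ℝ 1 fun q => fderiv ℝ (uncurry f) q (1, 0) :=
    (hf.fderiv_right (by norm_num)).clm_apply contDiff_const
  exact (hG.differentiable one_ne_zero).differentiableAt.comp y
    (differentiableAt_const x |>.prodMk differentiableAt_id)

theorem deriv_deriv_rpow_const (c : ℝ) (hf : ∀ v, f x v ≠ 0)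
    (h₁ : ∀ v, DifferentiableAt ℝ (fun u => f u v) x) (h₂ : DifferentiableAt ℝ (f x) y)
    (h₁₂ : DifferentiableAt ℝ (fun v => deriv (fun u => f u v) x) y) :
    deriv (fun v => deriv (fun u => f u v ^ c) x) y
      = c * f x y ^ (c - 1) * deriv (fun v => deriv (fun u => f u v) x) y
        + c * (c - 1) * f x y ^ (c - 2) * deriv (fun u => f u y) x * deriv (f x) y := by
  have hinner : (fun v => deriv (fun u => f u v ^ c) x)
      = fun v => c * f x v ^ (c - 1) * deriv (fun u => f u v) x := by
    funext v
    rw [deriv_rpow_const (h₁ v) (.inl (hf v))]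
    ring
  have houter := ((h₂.hasDerivAt.rpow_const (p := c - 1) (.inl (hf y))).const_mul c).fun_mul
    h₁₂.hasDerivAt
  rw [hinner, houter.deriv, sub_sub, one_add_one_eq_two]
  ring

end PartialDerivatives

theorem rpow_hazard_identity {s : ℝ} (hs : 0 < s) (c a d₁ d₂ : ℝ) :
    (c * s ^ (c - 1) * a + c * (c - 1) * s ^ (c - 2) * d₁ * d₂) / s ^ c
      = c * (a / s) - (-d₁ / s) * (-d₂ / s) * (c - c ^ 2) := by
  rw [Real.rpow_sub hs, Real.rpow_sub hs, Real.rpow_one, Real.rpow_two]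
  have := (Real.rpow_pos_of_pos hs c).ne'
  field_simp
  ring

theorem stmt_3_general (S0 : ℝ → ℝ → ℝ)
    (hpos : ∀ t1 t2, 0 < S0 t1 t2)
    (hsmooth : ContDiff ℝ 2 (fun q : ℝ × ℝ => S0 q.1 q.2))
    (c : ℝ) :
    ∀ t1 t2 : ℝ,
      (deriv (fun v => deriv (fun u => (S0 u v) ^ c) t1) t2) / ((S0 t1 t2) ^ c)
        = c * ((deriv (fun v => deriv (fun u => S0 u v) t1) t2) / S0 t1 t2)
          - (-(deriv (fun u => S0 u t2) t1) / S0 t1 t2)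
            * (-(deriv (fun v => S0 t1 v) t2) / S0 t1 t2) * (c - c ^ 2) := by
  intro t1 t2
  have hS : Differentiable ℝ (uncurry S0) := hsmooth.differentiable (by norm_num)
  rw [deriv_deriv_rpow_const c (fun v => (hpos t1 v).ne')
      (fun v => (hasDerivAt_partial_fst (hS (t1, v))).differentiableAt)
      (differentiableAt_partial_snd (hS (t1, t2)))
      (differentiableAt_deriv_partial_fst hsmooth)]
  exact rpow_hazard_identity (hpos t1 t2) ..

/-- Under the simple Lehmann model `S(t1,t2|z) = (S⁰(t1,t2))^c`
with `c = exp(bᵀz)`, the double-failure hazard satisfies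
`λ11(t1,t2|z) = c·λ11⁰ − λ10⁰·λ01⁰·(c − c²)`. -/
theorem stmt_3 (p : ℕ) (S0 : ℝ → ℝ → ℝ) (b z : Fin p → ℝ)
    (hpos : ∀ t1 t2, 0 < S0 t1 t2) (hle : ∀ t1 t2, S0 t1 t2 ≤ 1)
    (hsmooth : ContDiff ℝ 2 (fun q : ℝ × ℝ => S0 q.1 q.2))
    (c : ℝ) (hc : c = Real.exp (∑ i, b i * z i)) :
    ∀ t1 t2 : ℝ,
      (deriv (fun v => deriv (fun u => (S0 u v) ^ c) t1) t2) / ((S0 t1 t2) ^ c)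
        = c * ((deriv (fun v => deriv (fun u => S0 u v) t1) t2) / S0 t1 t2)
          - (-(deriv (fun u => S0 u t2) t1) / S0 t1 t2)
            * (-(deriv (fun v => S0 t1 v) t2) / S0 t1 t2) * (c - c ^ 2) :=
  stmt_3_general S0 hpos hsmooth c
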